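/- Under the hypotheses of the main theorem, for any x, y in the ball B_{r₀} of BC(ℝ≥0) and any t ≥ 0, |(Fx)(t) − (Fy)(t)| ≤ (1/Γ(α+1))·[(φ(t)Φ(r₀,r₀) + ψ(t))·|x(t) − y(t)| + Φ(2r₀,2r₀)·(φ(t)r₀ + ξ(t))]. Consequently diam (F X)(t) ≤ ((φ(t)Φ(r₀,r₀)+ψ(t))/Γ(α+1))·diam X(t) + (Φ(2r₀,2r₀)/Γ(α+1))·(φ(t)r₀ + ξ(t)) for every X ⊆ B_{r₀}. -/

import Mathlib

open Real intervalIntegral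

/-!
Write `(Fx)(t) - (Fy)(t) = (f(t,x(t)) - f(t,y(t)))/Γ(α) · I_x + f(t,y(t))/Γ(α) · (I_x - I_y)`,
where `I_x = ∫₀ᵗ u(t,s,x(s),x(λs)) (t-s)^(α-1) ds`. On the ball `B_{r₀}` the modulus of `u` bounds
the integrand of `I_x` by `n(t)Φ(r₀,r₀) + u*(t)` and that of `I_x - I_y` by `n(t)Φ(2r₀,2r₀)`, the
Lipschitz bound on `f` controls the two prefactors, and `∫₀ᵗ (t-s)^(α-1) ds = t^α/α` together with
`αΓ(α) = Γ(α+1)` gives the pointwise estimate. The diameter estimate follows by taking suprema.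
-/

open MeasureTheory Set

section Kernel

variable {α t : ℝ}

lemma intervalIntegrable_sub_rpow (hα : 0 < α) :
    IntervalIntegrable (fun s => (t - s) ^ (α - 1)) volume 0 t := by
  simpa using ((intervalIntegrable_rpow' (a := 0) (b := t) (by linarith)).comp_sub_left t).symm

lemma integral_sub_rpow (hα : 0 < α) :
    ∫ s in (0:ℝ)..t, (t - s) ^ (α - 1) = t ^ α / α := by
  rw [integral_comp_sub_left (fun z => z ^ (α - 1)) t, sub_self, sub_zero,
    integral_rpow (Or.inl (by linarith)), sub_add_cancel, zero_rpow hα.ne', sub_zero]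

lemma intervalIntegrable_mul_sub_rpow {g : ℝ → ℝ} (hα : 0 < α) (ht : 0 ≤ t)
    (hg : ContinuousOn g (Icc 0 t)) :
    IntervalIntegrable (fun s => g s * (t - s) ^ (α - 1)) volume 0 t :=
  (intervalIntegrable_sub_rpow hα).continuousOn_mul (by rwa [uIcc_of_le ht])

lemma abs_integral_mul_sub_rpow_le {g : ℝ → ℝ} {C : ℝ} (hα : 0 < α) (ht : 0 ≤ t)
    (hg : ∀ s ∈ Icc 0 t, |g s| ≤ C) :
    |∫ s in (0:ℝ)..t, g s * (t - s) ^ (α - 1)| ≤ C * (t ^ α / α) := by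
  rw [← integral_sub_rpow hα, ← intervalIntegral.integral_const_mul, ← Real.norm_eq_abs]
  refine norm_integral_le_of_norm_le ht (Filter.Eventually.of_forall fun s hs => ?_)
    ((intervalIntegrable_sub_rpow hα).const_mul C)
  have hw : 0 ≤ (t - s) ^ (α - 1) := rpow_nonneg (by linarith [hs.2]) _
  rw [norm_mul, norm_of_nonneg hw, Real.norm_eq_abs]
  exact mul_le_mul_of_nonneg_right (hg s (Ioc_subset_Icc_self hs)) hw

end Kernel

section Modulus

variable {v : ℝ → ℝ → ℝ} {Φ : ℝ → ℝ → ℝ} {c r : ℝ}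

lemma abs_le_of_modulus {M p q : ℝ}
    (hΦmono : ∀ p q p' q' : ℝ, 0 ≤ p → 0 ≤ q → p ≤ p' → q ≤ q' → Φ p q ≤ Φ p' q')
    (hc : 0 ≤ c) (hmod : ∀ x₁ y₁ x₂ y₂ : ℝ, |v x₂ y₂ - v x₁ y₁| ≤ c * Φ |x₂ - x₁| |y₂ - y₁|)
    (hv : |v 0 0| ≤ M) (hp : |p| ≤ r) (hq : |q| ≤ r) :
    |v p q| ≤ c * Φ r r + M := by
  have hdiff : |v p q - v 0 0| ≤ c * Φ r r := by
    refine (hmod 0 0 p q).trans (mul_le_mul_of_nonneg_left ?_ hc)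
    simpa using hΦmono _ _ _ _ (abs_nonneg p) (abs_nonneg q) hp hq
  calc |v p q| = |(v p q - v 0 0) + v 0 0| := by rw [sub_add_cancel]
    _ ≤ c * Φ r r + M := (abs_add_le _ _).trans (add_le_add hdiff hv)

lemma abs_sub_le_of_modulus {p q p' q' : ℝ}
    (hΦmono : ∀ p q p' q' : ℝ, 0 ≤ p → 0 ≤ q → p ≤ p' → q ≤ q' → Φ p q ≤ Φ p' q')
    (hc : 0 ≤ c) (hmod : ∀ x₁ y₁ x₂ y₂ : ℝ, |v x₂ y₂ - v x₁ y₁| ≤ c * Φ |x₂ - x₁| |y₂ - y₁|)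
    (hp : |p| ≤ r) (hq : |q| ≤ r) (hp' : |p'| ≤ r) (hq' : |q'| ≤ r) :
    |v p q - v p' q'| ≤ c * Φ (2 * r) (2 * r) := by
  refine (hmod p' q' p q).trans (mul_le_mul_of_nonneg_left ?_ hc)
  refine hΦmono _ _ _ _ (abs_nonneg _) (abs_nonneg _) ?_ ?_ <;>
    linarith [abs_sub p q', abs_sub p p', abs_sub q q']

end Modulus

lemma abs_add_mul_sub_add_mul_le {a p q I J A B c d : ℝ} (hpq : |p - q| ≤ A) (hI : |I| ≤ B)
    (hq : |q| ≤ c) (hIJ : |I - J| ≤ d) :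
    |(a + p * I) - (a + q * J)| ≤ A * B + c * d := by
  calc |(a + p * I) - (a + q * J)| = |(p - q) * I + q * (I - J)| := by ring_nf
    _ ≤ |p - q| * |I| + |q| * |I - J| := by rw [← abs_mul, ← abs_mul]; exact abs_add_le _ _
    _ ≤ A * B + c * d := add_le_add
        (mul_le_mul hpq hI (abs_nonneg _) ((abs_nonneg _).trans hpq))
        (mul_le_mul hq hIJ (abs_nonneg _) ((abs_nonneg _).trans hq))

lemma diam_image_le_of_dist_le_mul_add {ι E F : Type*} [PseudoMetricSpace E]
    [PseudoMetricSpace F] {X : Set ι} {g : ι → E} {h : ι → F} {K B : ℝ} (hK : 0 ≤ K)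
    (hB : 0 ≤ B) (hh : Bornology.IsBounded (h '' X))
    (hgh : ∀ x ∈ X, ∀ y ∈ X, dist (g x) (g y) ≤ K * dist (h x) (h y) + B) :
    Metric.diam (g '' X) ≤ K * Metric.diam (h '' X) + B := by
  refine Metric.diam_le_of_forall_dist_le (by positivity) ?_
  rintro _ ⟨x, hx, rfl⟩ _ ⟨y, hy, rfl⟩
  have hdist := Metric.dist_le_diam_of_mem hh (mem_image_of_mem h hx) (mem_image_of_mem h hy)
  exact (hgh x hx y hy).trans (by gcongr)

section Operator

variable {α l r t : ℝ} {n : ℝ → ℝ} {u : ℝ → ℝ → ℝ → ℝ → ℝ} {Φ : ℝ → ℝ → ℝ} {x y : ℝ → ℝ}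

lemma continuousOn_delay_integrand
    (hu : ContinuousOn (fun p : ℝ × ℝ × ℝ × ℝ => u p.1 p.2.1 p.2.2.1 p.2.2.2)
      (Ici 0 ×ˢ Ici 0 ×ˢ univ ×ˢ univ))
    (hl : 0 ≤ l) (ht : 0 ≤ t) (hx : ContinuousOn x (Ici 0)) :
    ContinuousOn (fun s => u t s (x s) (x (l * s))) (Icc 0 t) := by
  have hxl : ContinuousOn (fun s => x (l * s)) (Icc 0 t) :=
    hx.comp (continuous_const.mul continuous_id).continuousOn fun s hs => mul_nonneg hl hs.1
  refine hu.comp (continuousOn_const.prodMk (continuousOn_id.prodMk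
    ((hx.mono Icc_subset_Ici_self).prodMk hxl))) fun s hs => ⟨ht, hs.1, trivial, trivial⟩

lemma abs_operator_sub_le {a m : ℝ → ℝ} {f : ℝ → ℝ → ℝ} {ustar : ℝ}
    (hα : 0 < α) (hl : 0 ≤ l) (ht : 0 ≤ t)
    (hm : 0 ≤ m t) (hLip : ∀ p q : ℝ, |f t p - f t q| ≤ m t * |p - q|)
    (hu : ContinuousOn (fun p : ℝ × ℝ × ℝ × ℝ => u p.1 p.2.1 p.2.2.1 p.2.2.2)
      (Ici 0 ×ˢ Ici 0 ×ˢ univ ×ˢ univ))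
    (hn : 0 ≤ n t)
    (hΦmono : ∀ p q p' q' : ℝ, 0 ≤ p → 0 ≤ q → p ≤ p' → q ≤ q' → Φ p q ≤ Φ p' q')
    (humod : ∀ s ∈ Icc 0 t, ∀ x₁ y₁ x₂ y₂ : ℝ,
      |u t s x₂ y₂ - u t s x₁ y₁| ≤ n t * Φ |x₂ - x₁| |y₂ - y₁|)
    (hu0 : ∀ s ∈ Icc 0 t, |u t s 0 0| ≤ ustar)
    (hx : ContinuousOn x (Ici 0)) (hy : ContinuousOn y (Ici 0))
    (hxr : ∀ s ∈ Ici (0:ℝ), |x s| ≤ r) (hyr : ∀ s ∈ Ici (0:ℝ), |y s| ≤ r) :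
    |(a t + (f t (x t) / Gamma α) *
        ∫ s in (0:ℝ)..t, u t s (x s) (x (l * s)) * (t - s) ^ (α - 1)) -
      (a t + (f t (y t) / Gamma α) *
        ∫ s in (0:ℝ)..t, u t s (y s) (y (l * s)) * (t - s) ^ (α - 1))| ≤
      (1 / Gamma (α + 1)) *
        (((m t * n t * t ^ α) * Φ r r + m t * ustar * t ^ α) * |x t - y t| +
          Φ (2 * r) (2 * r) * ((m t * n t * t ^ α) * r + n t * |f t 0| * t ^ α)) := by
  have hG : 0 < Gamma α := Gamma_pos_of_pos hα
  have hIx : |∫ s in (0:ℝ)..t, u t s (x s) (x (l * s)) * (t - s) ^ (α - 1)| ≤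
      (n t * Φ r r + ustar) * (t ^ α / α) :=
    abs_integral_mul_sub_rpow_le hα ht fun s hs => abs_le_of_modulus hΦmono hn (humod s hs)
      (hu0 s hs) (hxr s hs.1) (hxr _ (mul_nonneg hl hs.1))
  have hIxy : |(∫ s in (0:ℝ)..t, u t s (x s) (x (l * s)) * (t - s) ^ (α - 1)) -
      ∫ s in (0:ℝ)..t, u t s (y s) (y (l * s)) * (t - s) ^ (α - 1)| ≤
      n t * Φ (2 * r) (2 * r) * (t ^ α / α) := by
    rw [← integral_sub (intervalIntegrable_mul_sub_rpow hα ht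
      (continuousOn_delay_integrand hu hl ht hx)) (intervalIntegrable_mul_sub_rpow hα ht
      (continuousOn_delay_integrand hu hl ht hy))]
    simp_rw [← sub_mul]
    exact abs_integral_mul_sub_rpow_le hα ht fun s hs => abs_sub_le_of_modulus hΦmono hn
      (humod s hs) (hxr s hs.1) (hxr _ (mul_nonneg hl hs.1)) (hyr s hs.1)
      (hyr _ (mul_nonneg hl hs.1))
  have hfxy : |f t (x t) / Gamma α - f t (y t) / Gamma α| ≤ m t * |x t - y t| / Gamma α := by
    rw [← sub_div, abs_div, abs_of_pos hG]
    gcongr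
    exact hLip _ _
  have hfy : |f t (y t) / Gamma α| ≤ (m t * r + |f t 0|) / Gamma α := by
    rw [abs_div, abs_of_pos hG]
    gcongr
    calc |f t (y t)| ≤ |f t (y t) - f t 0| + |f t 0| := by
          simpa using abs_add_le (f t (y t) - f t 0) (f t 0)
      _ ≤ m t * r + |f t 0| := by
        gcongr
        simpa using (hLip (y t) 0).trans (mul_le_mul_of_nonneg_left (by simpa using hyr t ht) hm)
  calc _ ≤ _ := abs_add_mul_sub_add_mul_le hfxy hIx hfy hIxy
    _ = _ := by
      rw [Gamma_add_one hα.ne']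
      field_simp

end Operator

theorem stmt10_general
    (α l : ℝ) (hα : 0 < α) (hl : 0 < l)
    (a m n : ℝ → ℝ) (f : ℝ → ℝ → ℝ) (u : ℝ → ℝ → ℝ → ℝ → ℝ) (Φ : ℝ → ℝ → ℝ)
    (ustar : ℝ → ℝ) (r₀ : ℝ)
    -- (h₂) : f is continuous and Lipschitz in its second variable with coefficient m
    (hm0 : ∀ t ∈ Set.Ici (0:ℝ), 0 ≤ m t)
    (hLip : ∀ t ∈ Set.Ici (0:ℝ), ∀ x y : ℝ, |f t x - f t y| ≤ m t * |x - y|)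
    -- (h₃) : u is continuous with modulus of continuity n(t) Φ
    (hu : ContinuousOn (fun p : ℝ × ℝ × ℝ × ℝ => u p.1 p.2.1 p.2.2.1 p.2.2.2)
      (Set.Ici 0 ×ˢ Set.Ici 0 ×ˢ Set.univ ×ˢ Set.univ))
    (hn0 : ∀ t ∈ Set.Ici (0:ℝ), 0 ≤ n t)
    (hΦmono : ∀ p q p' q' : ℝ, 0 ≤ p → 0 ≤ q → p ≤ p' → q ≤ q' → Φ p q ≤ Φ p' q')
    (hΦnn : ∀ p q : ℝ, 0 ≤ p → 0 ≤ q → 0 ≤ Φ p q)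
    (humod : ∀ t s : ℝ, 0 ≤ s → s ≤ t → ∀ x₁ y₁ x₂ y₂ : ℝ,
      |u t s x₂ y₂ - u t s x₁ y₁| ≤ n t * Φ |x₂ - x₁| |y₂ - y₁|)
    -- u*(t) = max_{0 ≤ s ≤ t} |u(t,s,0,0)|
    (hustar : ∀ t ∈ Set.Ici (0:ℝ),
      IsGreatest ((fun s => |u t s 0 0|) '' Set.Icc 0 t) (ustar t))
    -- (h₅)
    (hr₀ : 0 < r₀) :
    (∀ x y : ℝ → ℝ, ContinuousOn x (Set.Ici 0) → ContinuousOn y (Set.Ici 0) →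
      (∀ t ∈ Set.Ici (0:ℝ), |x t| ≤ r₀) → (∀ t ∈ Set.Ici (0:ℝ), |y t| ≤ r₀) →
      ∀ t ∈ Set.Ici (0:ℝ),
        |(a t + (f t (x t) / Real.Gamma α) *
            ∫ s in (0:ℝ)..t, u t s (x s) (x (l * s)) * (t - s) ^ (α - 1)) -
         (a t + (f t (y t) / Real.Gamma α) *
            ∫ s in (0:ℝ)..t, u t s (y s) (y (l * s)) * (t - s) ^ (α - 1))| ≤
          (1 / Real.Gamma (α + 1)) *
            (((m t * n t * t ^ α) * Φ r₀ r₀ + m t * ustar t * t ^ α) * |x t - y t| +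
              Φ (2 * r₀) (2 * r₀) * ((m t * n t * t ^ α) * r₀ + n t * |f t 0| * t ^ α))) ∧
    (∀ X : Set (ℝ → ℝ),
      (∀ x ∈ X, ContinuousOn x (Set.Ici 0) ∧ ∀ t ∈ Set.Ici (0:ℝ), |x t| ≤ r₀) →
      ∀ t ∈ Set.Ici (0:ℝ),
        Metric.diam ((fun x : ℝ → ℝ => a t + (f t (x t) / Real.Gamma α) *
            ∫ s in (0:ℝ)..t, u t s (x s) (x (l * s)) * (t - s) ^ (α - 1)) '' X) ≤
          ((m t * n t * t ^ α) * Φ r₀ r₀ + m t * ustar t * t ^ α) / Real.Gamma (α + 1) *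
            Metric.diam ((fun x : ℝ → ℝ => x t) '' X) +
          Φ (2 * r₀) (2 * r₀) / Real.Gamma (α + 1) *
            ((m t * n t * t ^ α) * r₀ + n t * |f t 0| * t ^ α)) := by
  have pointwise := fun (x y : ℝ → ℝ) hx hy hxr hyr t (ht : t ∈ Ici (0:ℝ)) =>
    abs_operator_sub_le (a := a) (r := r₀) (x := x) (y := y) hα hl.le ht (hm0 t ht) (hLip t ht)
      hu (hn0 t ht) hΦmono (fun s hs => humod t s hs.1 hs.2) (fun s hs => (hustar t ht).2 (mem_image_of_mem _ hs))
      hx hy hxr hyr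
  refine ⟨pointwise, fun X hX t ht => ?_⟩
  have hn := hn0 t ht
  have hm := hm0 t ht
  have htα : 0 ≤ t ^ α := rpow_nonneg ht α
  refine diam_image_le_of_dist_le_mul_add ?_ ?_ ?_ ?_
  · obtain ⟨s, -, hs⟩ := (hustar t ht).1
    have hΦr := hΦnn r₀ r₀ hr₀.le hr₀.le
    have hustar_nonneg : 0 ≤ ustar t := hs ▸ abs_nonneg _
    positivity
  · have hΦ2r := hΦnn (2 * r₀) (2 * r₀) (by positivity) (by positivity)
    positivity
  · refine (Metric.isBounded_Icc (-r₀) r₀).subset ?_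
    rintro _ ⟨x, hx, rfl⟩
    exact abs_le.mp ((hX x hx).2 t ht)
  · intro x hx y hy
    rw [dist_eq, dist_eq]
    refine (pointwise x y (hX x hx).1 (hX y hy).1 (hX x hx).2 (hX y hy).2 t ht).trans_eq ?_
    ring

/-- Pointwise difference estimate for the operator `𝓕` on `B_{r₀}`, and the
resulting estimate for the diameter `diam (𝓕X)(t)`. -/
theorem stmt10
    (α l : ℝ) (hα : 0 < α) (hα1 : α < 1) (hl : 0 < l) (hl1 : l < 1)
    (a m n : ℝ → ℝ) (f : ℝ → ℝ → ℝ) (u : ℝ → ℝ → ℝ → ℝ → ℝ) (Φ : ℝ → ℝ → ℝ)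
    (ustar : ℝ → ℝ) (normA φs ψs ξs ηs r₀ : ℝ)
    -- (h₁) : a is continuous and bounded on ℝ≥0, with sup norm normA
    (ha : ContinuousOn a (Set.Ici 0))
    (hA : IsLUB ((fun t => |a t|) '' Set.Ici 0) normA)
    -- (h₂) : f is continuous and Lipschitz in its second variable with coefficient m
    (hf : ContinuousOn (fun p : ℝ × ℝ => f p.1 p.2) (Set.Ici 0 ×ˢ Set.univ))
    (hmc : ContinuousOn m (Set.Ici 0)) (hm0 : ∀ t ∈ Set.Ici (0:ℝ), 0 ≤ m t)
    (hLip : ∀ t ∈ Set.Ici (0:ℝ), ∀ x y : ℝ, |f t x - f t y| ≤ m t * |x - y|)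
    -- (h₃) : u is continuous with modulus of continuity n(t) Φ
    (hu : ContinuousOn (fun p : ℝ × ℝ × ℝ × ℝ => u p.1 p.2.1 p.2.2.1 p.2.2.2)
      (Set.Ici 0 ×ˢ Set.Ici 0 ×ˢ Set.univ ×ˢ Set.univ))
    (hnc : ContinuousOn n (Set.Ici 0)) (hn0 : ∀ t ∈ Set.Ici (0:ℝ), 0 ≤ n t)
    (hΦc : ContinuousOn (fun p : ℝ × ℝ => Φ p.1 p.2) (Set.Ici 0 ×ˢ Set.Ici 0))
    (hΦmono : ∀ p q p' q' : ℝ, 0 ≤ p → 0 ≤ q → p ≤ p' → q ≤ q' → Φ p q ≤ Φ p' q')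
    (hΦ0 : Φ 0 0 = 0)
    (hΦnn : ∀ p q : ℝ, 0 ≤ p → 0 ≤ q → 0 ≤ Φ p q)
    (humod : ∀ t s : ℝ, 0 ≤ s → s ≤ t → ∀ x₁ y₁ x₂ y₂ : ℝ,
      |u t s x₂ y₂ - u t s x₁ y₁| ≤ n t * Φ |x₂ - x₁| |y₂ - y₁|)
    -- u*(t) = max_{0 ≤ s ≤ t} |u(t,s,0,0)|
    (hustar : ∀ t ∈ Set.Ici (0:ℝ),
      IsGreatest ((fun s => |u t s 0 0|) '' Set.Icc 0 t) (ustar t))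
    -- (h₄) : φ, ψ, ξ, η are bounded with suprema φ*, ψ*, ξ*, η*, and φ, ξ → 0 at ∞
    (hφlub : IsLUB ((fun t => m t * n t * t ^ α) '' Set.Ici 0) φs)
    (hψlub : IsLUB ((fun t => m t * ustar t * t ^ α) '' Set.Ici 0) ψs)
    (hξlub : IsLUB ((fun t => n t * |f t 0| * t ^ α) '' Set.Ici 0) ξs)
    (hηlub : IsLUB ((fun t => ustar t * |f t 0| * t ^ α) '' Set.Ici 0) ηs)
    (hφ0 : Filter.Tendsto (fun t => m t * n t * t ^ α) Filter.atTop (nhds 0))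
    (hξ0 : Filter.Tendsto (fun t => n t * |f t 0| * t ^ α) Filter.atTop (nhds 0))
    -- (h₅)
    (hr₀ : 0 < r₀)
    (hineq : normA * Real.Gamma (α + 1) +
      (φs * r₀ * Φ r₀ r₀ + ψs * r₀ + ξs * Φ r₀ r₀ + ηs) ≤ r₀ * Real.Gamma (α + 1))
    (hk : φs * Φ r₀ r₀ + ψs < Real.Gamma (α + 1)) :
    (∀ x y : ℝ → ℝ, ContinuousOn x (Set.Ici 0) → ContinuousOn y (Set.Ici 0) →
      (∀ t ∈ Set.Ici (0:ℝ), |x t| ≤ r₀) → (∀ t ∈ Set.Ici (0:ℝ), |y t| ≤ r₀) →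
      ∀ t ∈ Set.Ici (0:ℝ),
        |(a t + (f t (x t) / Real.Gamma α) *
            ∫ s in (0:ℝ)..t, u t s (x s) (x (l * s)) * (t - s) ^ (α - 1)) -
         (a t + (f t (y t) / Real.Gamma α) *
            ∫ s in (0:ℝ)..t, u t s (y s) (y (l * s)) * (t - s) ^ (α - 1))| ≤
          (1 / Real.Gamma (α + 1)) *
            (((m t * n t * t ^ α) * Φ r₀ r₀ + m t * ustar t * t ^ α) * |x t - y t| +
              Φ (2 * r₀) (2 * r₀) * ((m t * n t * t ^ α) * r₀ + n t * |f t 0| * t ^ α))) ∧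
    (∀ X : Set (ℝ → ℝ),
      (∀ x ∈ X, ContinuousOn x (Set.Ici 0) ∧ ∀ t ∈ Set.Ici (0:ℝ), |x t| ≤ r₀) →
      ∀ t ∈ Set.Ici (0:ℝ),
        Metric.diam ((fun x : ℝ → ℝ => a t + (f t (x t) / Real.Gamma α) *
            ∫ s in (0:ℝ)..t, u t s (x s) (x (l * s)) * (t - s) ^ (α - 1)) '' X) ≤
          ((m t * n t * t ^ α) * Φ r₀ r₀ + m t * ustar t * t ^ α) / Real.Gamma (α + 1) *
            Metric.diam ((fun x : ℝ → ℝ => x t) '' X) +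
          Φ (2 * r₀) (2 * r₀) / Real.Gamma (α + 1) *
            ((m t * n t * t ^ α) * r₀ + n t * |f t 0| * t ^ α)) :=
  stmt10_general α l hα hl a m n f u Φ ustar r₀ hm0 hLip hu hn0 hΦmono hΦnn humod hustar hr₀
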